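/- arXiv:2305.02804 — 5 statements merged into one kernel-verified Lean document; each statement's English description precedes it below -/
import Mathlib

section
/- The function z(β) = coth(β) − 1/β, extended by z(0) = 0, is an odd, continuous, strictly increasing function from ℝ to (−1,1), and it is a bijection from ℝ onto (−1,1). -/
open Set

/-- `z(β) = coth β − 1/β`, with (Lean's) convention giving `z 0 = 0`. -/
noncomputable def z (β : ℝ) : ℝ := Real.cosh β / Real.sinh β - 1/β

/-!
On `β ≥ 0` the identity `z β = (β cosh β − sinh β) / (β sinh β)` and two elementary inequalities
`sinh β ≤ β cosh β ≤ (1 + β²) sinh β` give `0 ≤ z β ≤ β`, hence continuity at `0`. Away from `0`,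
`z' β = 1/β² − 1/sinh² β > 0` because `|sinh β| > |β|`, so the odd function `z` is strictly
increasing. Finally `coth β → 1` and `1/β → 0` give `z → ±1` at `±∞`, and a continuous strictly
increasing function with these limits maps `ℝ` bijectively onto `(−1, 1)`.
-/

open Real Filter Topology

theorem StrictMono.bijOn_Ioo_of_tendsto {α β : Type*} [LinearOrder α] [TopologicalSpace α]
    [ConnectedSpace α] [NoMinOrder α] [NoMaxOrder α] [LinearOrder β] [TopologicalSpace β]
    [OrderClosedTopology β] {f : α → β} {a b : β} (hf : StrictMono f) (hc : Continuous f)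
    (ha : Tendsto f atBot (𝓝 a)) (hb : Tendsto f atTop (𝓝 b)) :
    BijOn f univ (Ioo a b) := by
  refine ⟨fun x _ => ⟨?_, ?_⟩, hf.injective.injOn, fun y hy => ?_⟩
  · obtain ⟨x', hx'⟩ := exists_lt x
    exact (hf.monotone.le_of_tendsto ha x').trans_lt (hf hx')
  · obtain ⟨x', hx'⟩ := exists_gt x
    exact (hf hx').trans_le (hf.monotone.ge_of_tendsto hb x')
  obtain ⟨x, hx⟩ := mem_range_of_exists_le_of_exists_ge hc
    ((ha.eventually (eventually_lt_nhds hy.1)).exists.imp fun _ => le_of_lt)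
    ((hb.eventually (eventually_gt_nhds hy.2)).exists.imp fun _ => le_of_lt)
  exact ⟨x, mem_univ x, hx⟩

theorem apply_zero_le_of_hasDerivAt_nonneg {f f' : ℝ → ℝ} (hf : ∀ x, HasDerivAt f (f' x) x)
    (hf' : ∀ x, 0 < x → 0 ≤ f' x) {x : ℝ} (hx : 0 ≤ x) : f 0 ≤ f x :=
  monotoneOn_of_hasDerivWithinAt_nonneg (convex_Ici 0)
    (continuous_iff_continuousAt.2 fun x => (hf x).continuousAt).continuousOn
    (fun x _ => (hf x).hasDerivWithinAt) (by simpa using hf') self_mem_Ici hx hx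

namespace Real

theorem sinh_le_mul_cosh {x : ℝ} (hx : 0 ≤ x) : sinh x ≤ x * cosh x := by
  have key := apply_zero_le_of_hasDerivAt_nonneg (f := fun b => b * cosh b - sinh b)
    (fun b => ((hasDerivAt_id b).mul (hasDerivAt_cosh b)).sub (hasDerivAt_sinh b))
    (fun b hb => by
      have : 0 ≤ b * sinh b := mul_nonneg hb.le (sinh_nonneg_iff.2 hb.le)
      simp only [id_eq]
      linarith) hx
  simp only [zero_mul, sinh_zero, sub_zero] at key
  linarith

theorem mul_cosh_le {x : ℝ} (hx : 0 ≤ x) : x * cosh x ≤ (1 + x ^ 2) * sinh x := by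
  have key := apply_zero_le_of_hasDerivAt_nonneg (f := fun b => (1 + b ^ 2) * sinh b - b * cosh b)
    (fun b => (((hasDerivAt_pow 2 b).const_add 1).mul (hasDerivAt_sinh b)).sub
      ((hasDerivAt_id b).mul (hasDerivAt_cosh b)))
    (fun b hb => by
      have : 0 ≤ b * sinh b := mul_nonneg hb.le (sinh_nonneg_iff.2 hb.le)
      have : 0 ≤ b ^ 2 * cosh b := mul_nonneg (sq_nonneg b) (cosh_pos b).le
      simp only [id_eq, Nat.cast_ofNat, Nat.add_one_sub_one, pow_one]
      nlinarith) hx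
  simp only [sinh_zero, mul_zero, zero_mul, sub_zero] at key
  linarith

end Real

theorem z_zero : z 0 = 0 := by simp [z]

theorem z_neg (β : ℝ) : z (-β) = -z β := by
  simp only [z, cosh_neg, sinh_neg, div_neg]
  ring

theorem z_eq_div {β : ℝ} (hβ : β ≠ 0) :
    z β = (β * cosh β - sinh β) / (β * sinh β) := by
  rw [z, div_sub_div _ _ (sinh_ne_zero.2 hβ) hβ]
  ring

theorem z_mem_Icc {β : ℝ} (hβ : 0 < β) : z β ∈ Icc 0 β := by
  have hden : 0 < β * sinh β := mul_pos hβ (sinh_pos_iff.2 hβ)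
  rw [z_eq_div hβ.ne', mem_Icc, div_le_iff₀ hden]
  refine ⟨div_nonneg (sub_nonneg.2 (sinh_le_mul_cosh hβ.le)) hden.le, ?_⟩
  nlinarith [mul_cosh_le hβ.le]

theorem abs_z_le (β : ℝ) : |z β| ≤ |β| := by
  rcases lt_trichotomy β 0 with hβ | rfl | hβ
  · obtain ⟨h0, hle⟩ := z_mem_Icc (neg_pos.2 hβ)
    rw [z_neg] at h0 hle
    rw [abs_of_nonpos (by linarith), abs_of_neg hβ]
    exact hle
  · simp [z_zero]
  · obtain ⟨h0, hle⟩ := z_mem_Icc hβ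
    rwa [abs_of_nonneg h0, abs_of_pos hβ]

theorem continuous_z : Continuous z := by
  refine continuous_iff_continuousAt.2 fun β => ?_
  rcases eq_or_ne β 0 with rfl | hβ
  · rw [ContinuousAt, z_zero]
    exact squeeze_zero_norm abs_z_le (continuous_abs.tendsto' (0 : ℝ) 0 abs_zero)
  · exact (continuous_cosh.continuousAt.div continuous_sinh.continuousAt (sinh_ne_zero.2 hβ)).sub
      (continuousAt_const.div continuousAt_id hβ)

theorem hasDerivAt_z {β : ℝ} (hβ : β ≠ 0) :
    HasDerivAt z (1 / β ^ 2 - 1 / sinh β ^ 2) β := by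
  have hs : sinh β ≠ 0 := sinh_ne_zero.2 hβ
  have hz : z = cosh / sinh - fun b => b⁻¹ := funext fun b => by
    rw [z, one_div, Pi.sub_apply, Pi.div_apply]
  rw [hz]
  refine (((hasDerivAt_cosh β).div (hasDerivAt_sinh β) hs).sub (hasDerivAt_inv hβ)).congr_deriv ?_
  field_simp
  linear_combination -β ^ 2 * cosh_sq_sub_sinh_sq β

theorem strictMonoOn_z : StrictMonoOn z (Ici 0) := by
  refine strictMonoOn_of_deriv_pos (convex_Ici 0) continuous_z.continuousOn fun β hβ => ?_
  rw [interior_Ici] at hβ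
  have hβ : 0 < β := hβ
  rw [(hasDerivAt_z hβ.ne').deriv, sub_pos]
  exact one_div_lt_one_div_of_lt (by positivity)
    (pow_lt_pow_left₀ (self_lt_sinh_iff.2 hβ) hβ.le two_ne_zero)

theorem strictMono_z : StrictMono z :=
  strictMono_of_odd_strictMonoOn_nonneg z_neg strictMonoOn_z

theorem tendsto_z_atTop : Tendsto z atTop (𝓝 1) := by
  have hsinh : Tendsto sinh atTop atTop :=
    tendsto_atTop_mono' atTop ((eventually_ge_atTop 0).mono fun _ hx => self_le_sinh_iff.2 hx)
      tendsto_id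
  have hexp : Tendsto (fun β => exp (-β)) atTop (𝓝 0) :=
    tendsto_exp_atBot.comp tendsto_neg_atTop_atBot
  have hlim : Tendsto (fun β => 1 + exp (-β) / sinh β - 1 / β) atTop (𝓝 (1 + 0 - 0)) :=
    (tendsto_const_nhds.add (hexp.div_atTop hsinh)).sub (tendsto_const_nhds.div_atTop tendsto_id)
  rw [add_zero, sub_zero] at hlim
  refine hlim.congr' ((eventually_gt_atTop 0).mono fun β hβ => ?_)
  rw [z, ← cosh_sub_sinh, sub_div, div_self (sinh_pos_iff.2 hβ).ne']
  ring

theorem tendsto_z_atBot : Tendsto z atBot (𝓝 (-1)) := by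
  have : z = fun β => -z (-β) := funext fun β => by rw [z_neg, neg_neg]
  rw [this]
  exact (tendsto_z_atTop.comp tendsto_neg_atBot_atTop).neg

/-- `z` is odd, continuous, strictly increasing, maps into `(-1,1)`, and is a
bijection from `ℝ` onto `(-1,1)`. -/
theorem z_odd_continuous_strictMono_bijOn :
    (∀ β : ℝ, z (-β) = - z β) ∧ Continuous z ∧ StrictMono z ∧
    BijOn z univ (Ioo (-1:ℝ) 1) :=
  ⟨z_neg, continuous_z, strictMono_z,
    strictMono_z.bijOn_Ioo_of_tendsto continuous_z tendsto_z_atBot tendsto_z_atTop⟩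
end

section
/- For the M1 distribution f̂(v) = ρ (β/sinh β) e^{βv} on [-1,1] with β ≠ 0, the second moment equals q = ⟨v² f̂⟩ = ρ(1 − 2u/β), where u = coth β − 1/β. -/
/-!
`v ↦ e^{βv} (v²/β − 2v/β² + 2/β³)` is an antiderivative of `v² e^{βv}`, so
`∫_{-1}^1 v² e^{βv} dv = 2((1/β + 2/β³) sinh β − 2 cosh β / β²)`; multiplying by the
normalisation `ρ β / (2 sinh β)` gives `ρ (1 + 2/β² − 2 coth β / β) = ρ (1 − 2u/β)`.
-/

open Real

section SecondMomentOfExp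

variable {β : ℝ}

theorem hasDerivAt_exp_mul_sq_antideriv (hβ : β ≠ 0) (v : ℝ) :
    HasDerivAt (fun v => exp (β * v) * (v ^ 2 / β - 2 * v / β ^ 2 + 2 / β ^ 3))
      (v ^ 2 * exp (β * v)) v := by
  have hexp : HasDerivAt (fun v => exp (β * v)) (exp (β * v) * β) v :=
    ((hasDerivAt_id v).const_mul β).exp.congr_deriv (by simp)
  have hpoly := (((hasDerivAt_pow 2 v).div_const β).sub
    (((hasDerivAt_id' v).const_mul 2).div_const (β ^ 2))).add_const (2 / β ^ 3)
  refine (hexp.mul hpoly).congr_deriv ?_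
  simp only [Pi.sub_apply]
  field_simp
  ring

theorem integral_sq_mul_exp (hβ : β ≠ 0) (a b : ℝ) :
    ∫ v in a..b, v ^ 2 * exp (β * v)
      = exp (β * b) * (b ^ 2 / β - 2 * b / β ^ 2 + 2 / β ^ 3)
        - exp (β * a) * (a ^ 2 / β - 2 * a / β ^ 2 + 2 / β ^ 3) :=
  intervalIntegral.integral_eq_sub_of_hasDerivAt
    (fun v _ => hasDerivAt_exp_mul_sq_antideriv hβ v)
    ((by fun_prop : Continuous fun v => v ^ 2 * exp (β * v)).intervalIntegrable a b)

theorem integral_neg_one_one_sq_mul_exp (hβ : β ≠ 0) :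
    ∫ v in (-1:ℝ)..1, v ^ 2 * exp (β * v)
      = 2 * ((1 / β + 2 / β ^ 3) * sinh β - 2 * cosh β / β ^ 2) := by
  rw [integral_sq_mul_exp hβ, sinh_eq, cosh_eq]
  simp only [mul_one, mul_neg_one]
  ring

end SecondMomentOfExp

theorem m1_closure_second_moment_general (ρ β : ℝ) (hβ : β ≠ 0) :
    (1/2) * (∫ v in (-1:ℝ)..1, v^2 * (ρ * (β / Real.sinh β) * Real.exp (β * v)))
      = ρ * (1 - 2 * (Real.cosh β / Real.sinh β - 1/β) / β) := by
  have hsinh : sinh β ≠ 0 := sinh_ne_zero.mpr hβ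
  have hfactor : ∀ v : ℝ, v ^ 2 * (ρ * (β / sinh β) * exp (β * v))
      = ρ * (β / sinh β) * (v ^ 2 * exp (β * v)) := fun v => by ring
  simp only [hfactor, intervalIntegral.integral_const_mul, integral_neg_one_one_sq_mul_exp hβ]
  field_simp
  ring

/-- For the M1 distribution `f̂(v) = ρ (β/sinh β) e^{βv}` on `[-1,1]` with `β ≠ 0`,
the second moment is `q = ⟨v² f̂⟩ = ρ (1 − 2u/β)` with `u = coth β − 1/β`. -/
theorem m1_closure_second_moment (ρ β : ℝ) (hρ : 0 < ρ) (hβ : β ≠ 0) :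
    (1/2) * (∫ v in (-1:ℝ)..1, v^2 * (ρ * (β / Real.sinh β) * Real.exp (β * v)))
      = ρ * (1 - 2 * (Real.cosh β / Real.sinh β - 1/β) / β) :=
  m1_closure_second_moment_general ρ β hβ
end

section
/- For all β ≠ 0, with u = z(β) = coth β − 1/β, the quantity 1 − 2u/β − u² is strictly positive; equivalently, the 2×2 matrix ⟨m ⊗ m e^{α+βv}⟩ with m(v) = (1, v)ᵀ is invertible (positive definite). -/
/-! Since `cosh² = 1 + sinh²`, the quantity `1 − 2u/β − u²` equals
`(sinh² β − β²) / (β² sinh² β)`, which is positive because `|sinh β| > |β|` for `β ≠ 0`.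
The Hessian has positive corner `ρ` (as `sinh β / β > 0`) and determinant
`ρ² (1 − 2u/β − u²) > 0`, so it is positive definite by the 2 × 2 Sylvester criterion. -/

open Matrix

theorem Matrix.posDef_fin_two_of_pos_of_det_pos {R : Type*} [Field R] [LinearOrder R]
    [IsStrictOrderedRing R] [StarRing R] [TrivialStar R] {a b c : R}
    (ha : 0 < a) (hdet : 0 < a * c - b ^ 2) : (!![a, b; b, c]).PosDef := by
  refine Matrix.PosDef.of_dotProduct_mulVec_pos ?_ fun x hx => ?_
  · ext i j
    fin_cases i <;> fin_cases j <;> simp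
  have hquad : star x ⬝ᵥ !![a, b; b, c] *ᵥ x
      = ((a * x 0 + b * x 1) ^ 2 + (a * c - b ^ 2) * x 1 ^ 2) / a := by
    simp only [star_trivial, dotProduct, mulVec, Fin.sum_univ_two, cons_val_zero, cons_val_one,
      of_apply, cons_val', cons_val_fin_one, empty_val']
    field_simp
    ring
  rw [hquad]
  refine div_pos ?_ ha
  rcases eq_or_ne (x 1) 0 with h1 | h1
  · have h0 : x 0 ≠ 0 := fun h0 => hx (funext fun i => by fin_cases i <;> assumption)
    simpa [h1] using sq_pos_of_ne_zero (mul_ne_zero ha.ne' h0)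
  · positivity

namespace Real

theorem sq_lt_sinh_sq {x : ℝ} (hx : x ≠ 0) : x ^ 2 < sinh x ^ 2 := by
  rw [← sq_abs, ← sq_abs (sinh x), abs_sinh]
  exact pow_lt_pow_left₀ (self_lt_sinh_iff.mpr (abs_pos.mpr hx)) (abs_nonneg x) two_ne_zero

theorem sinh_div_self_pos {x : ℝ} (hx : x ≠ 0) : 0 < sinh x / x := by
  rcases hx.lt_or_gt with hneg | hpos
  · exact div_pos_of_neg_of_neg (sinh_neg_iff.mpr hneg) hneg
  · exact div_pos (sinh_pos_iff.mpr hpos) hpos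

end Real

theorem one_sub_two_mul_z_div_sub_z_sq {β : ℝ} (hβ : β ≠ 0) :
    1 - 2 * z β / β - z β ^ 2 = (Real.sinh β ^ 2 - β ^ 2) / (β ^ 2 * Real.sinh β ^ 2) := by
  have hsinh : Real.sinh β ≠ 0 := Real.sinh_ne_zero.mpr hβ
  unfold z
  field_simp
  linear_combination (-β ^ 2) * Real.cosh_sq' β

theorem one_sub_two_mul_z_div_sub_z_sq_pos {β : ℝ} (hβ : β ≠ 0) :
    0 < 1 - 2 * z β / β - z β ^ 2 := by
  rw [one_sub_two_mul_z_div_sub_z_sq hβ]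
  have hsinh : Real.sinh β ≠ 0 := Real.sinh_ne_zero.mpr hβ
  exact div_pos (sub_pos.mpr (Real.sq_lt_sinh_sq hβ)) (by positivity)

/-- For `β ≠ 0`, with `u = z β`, `1 − 2u/β − u² > 0`; equivalently the Hessian
matrix `⟨m ⊗ m e^{α+βv}⟩ = (ρ, j; j, q)` with `ρ = e^α sinh β / β`, `j = ρ u`,
`q = ρ (1 − 2u/β)` is positive definite (hence invertible). -/
theorem m1_hessian_posDef (α β : ℝ) (hβ : β ≠ 0) :
    0 < 1 - 2 * z β / β - (z β)^2 ∧
    (!![Real.exp α * Real.sinh β / β, (Real.exp α * Real.sinh β / β) * z β;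
        (Real.exp α * Real.sinh β / β) * z β,
        (Real.exp α * Real.sinh β / β) * (1 - 2 * z β / β)]).PosDef ∧
    IsUnit (!![Real.exp α * Real.sinh β / β, (Real.exp α * Real.sinh β / β) * z β;
        (Real.exp α * Real.sinh β / β) * z β,
        (Real.exp α * Real.sinh β / β) * (1 - 2 * z β / β)]).det := by
  have hgap := one_sub_two_mul_z_div_sub_z_sq_pos hβ
  have hρ : 0 < Real.exp α * Real.sinh β / β := by
    rw [mul_div_assoc]
    exact mul_pos (Real.exp_pos α) (Real.sinh_div_self_pos hβ)
  set ρ := Real.exp α * Real.sinh β / β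
  have hPD := Matrix.posDef_fin_two_of_pos_of_det_pos (b := ρ * z β) (c := ρ * (1 - 2 * z β / β))
    hρ <| by
      calc 0 < ρ ^ 2 * (1 - 2 * z β / β - z β ^ 2) := by positivity
        _ = _ := by ring
  exact ⟨hgap, hPD, isUnit_iff_ne_zero.mpr hPD.det_pos.ne'⟩
end

section
/- The minimizer of the Boltzmann entropy functional h(f) = ⟨f ln f − f⟩ over nonnegative f ∈ L²([-1,1]) satisfying the moment constraints ⟨f⟩ = ρ, ⟨v f⟩ = j (with ρ > 0 and |j/ρ| < 1) is the exponential function f̂(v) = e^{α + βv}, where β = z⁻¹(j/ρ) and e^α = ρ β / sinh β. -/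
/-!
Gibbs' variational principle. Since `x ↦ x log x - x` is convex with derivative `log x`,
its tangent at `y = e^φ` gives pointwise
`f log f - f ≥ e^φ φ - e^φ + φ (f - e^φ)`.
For the affine exponent `φ v = α + β v`, the normalization of `α` and the relation
`z β = j / ρ` say exactly that `e^φ` has the moments `⟨e^φ⟩ = ρ`, `⟨v e^φ⟩ = j` of `f`,
so the last term integrates to zero.
-/

open MeasureTheory Set

open Real

noncomputable def entropyDensity (x : ℝ) : ℝ := x * log x - x

lemma entropyDensity_add_log_mul_sub_le {x y : ℝ} (hx : 0 ≤ x) (hy : 0 < y) :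
    entropyDensity y + log y * (x - y) ≤ entropyDensity x := by
  unfold entropyDensity
  rcases hx.eq_or_lt with rfl | hx
  · simp only [log_zero, mul_zero, zero_sub, sub_zero, mul_neg]
    linarith
  · have h := self_sub_one_le_mul_log (div_pos hx hy).le
    rw [log_div hx.ne' hy.ne'] at h
    have h' := mul_le_mul_of_nonneg_left h hy.le
    field_simp at h'
    nlinarith

lemma abs_mul_log_le_one_add_sq {x : ℝ} (hx : 0 ≤ x) : |x * log x| ≤ 1 + x ^ 2 := by
  rcases le_or_gt x 1 with h1 | h1
  · rcases hx.eq_or_lt with rfl | hx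
    · simp
    · have := abs_log_mul_self_lt x hx h1
      rw [mul_comm]
      linarith [sq_nonneg x]
  · rw [abs_of_nonneg (mul_log_nonneg h1.le)]
    nlinarith [log_le_sub_one_of_pos (zero_lt_one.trans h1)]

lemma MeasureTheory.MemLp.integrable_mul_log {α : Type*} [MeasurableSpace α] {μ : Measure α}
    [IsFiniteMeasure μ] {f : α → ℝ} (hf : MemLp f 2 μ) (hf0 : 0 ≤ᵐ[μ] f) :
    Integrable (fun x => f x * log (f x)) μ := by
  refine ((integrable_const 1).add hf.integrable_sq).mono'
    (hf.aestronglyMeasurable.mul (measurable_log.comp_aemeasurable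
      hf.aestronglyMeasurable.aemeasurable).aestronglyMeasurable) ?_
  filter_upwards [hf0] with x hx
  exact abs_mul_log_le_one_add_sq hx

theorem integral_entropyDensity_exp_le {α : Type*} [MeasurableSpace α] {μ : Measure α}
    {φ f : α → ℝ} (hf : 0 ≤ᵐ[μ] f)
    (hφ : Integrable (fun x => entropyDensity (exp (φ x))) μ)
    (hφf : Integrable (fun x => φ x * (f x - exp (φ x))) μ)
    (hfent : Integrable (fun x => entropyDensity (f x)) μ)
    (horth : ∫ x, φ x * (f x - exp (φ x)) ∂μ = 0) :
    ∫ x, entropyDensity (exp (φ x)) ∂μ ≤ ∫ x, entropyDensity (f x) ∂μ :=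
  calc ∫ x, entropyDensity (exp (φ x)) ∂μ
      = ∫ x, entropyDensity (exp (φ x)) + φ x * (f x - exp (φ x)) ∂μ := by
        rw [integral_add hφ hφf, horth, add_zero]
    _ ≤ ∫ x, entropyDensity (f x) ∂μ := by
        refine integral_mono_ae (hφ.add hφf) hfent ?_
        filter_upwards [hf] with x hx
        simpa only [log_exp] using entropyDensity_add_log_mul_sub_le hx (exp_pos (φ x))

lemma integral_affine_mul_sub_eq_zero {μ : Measure ℝ} {f g : ℝ → ℝ}
    (hf : Integrable f μ) (hg : Integrable g μ)
    (hvf : Integrable (fun v => v * f v) μ) (hvg : Integrable (fun v => v * g v) μ)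
    (h₀ : ∫ v, f v ∂μ = ∫ v, g v ∂μ) (h₁ : ∫ v, v * f v ∂μ = ∫ v, v * g v ∂μ) (a b : ℝ) :
    ∫ v, (a + b * v) * (f v - g v) ∂μ = 0 := by
  have hexpand : ∀ v, (a + b * v) * (f v - g v) =
      (a * f v + b * (v * f v)) - (a * g v + b * (v * g v)) := fun v => by ring
  have hF : Integrable (fun v => a * f v + b * (v * f v)) μ :=
    (hf.const_mul a).add (hvf.const_mul b)
  have hG : Integrable (fun v => a * g v + b * (v * g v)) μ :=
    (hg.const_mul a).add (hvg.const_mul b)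
  simp_rw [hexpand]
  rw [integral_sub hF hG, integral_add (hf.const_mul a) (hvf.const_mul b),
    integral_add (hg.const_mul a) (hvg.const_mul b), integral_const_mul, integral_const_mul,
    integral_const_mul, integral_const_mul, h₀, h₁, sub_self]

lemma integral_exp_const_mul {β : ℝ} (hβ : β ≠ 0) (a b : ℝ) :
    ∫ v in a..b, exp (β * v) = (exp (β * b) - exp (β * a)) / β := by
  rw [intervalIntegral.integral_comp_mul_left (fun v => exp v) hβ, integral_exp, smul_eq_mul,
    inv_mul_eq_div]

lemma integral_mul_exp_const_mul {β : ℝ} (hβ : β ≠ 0) (a b : ℝ) :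
    ∫ v in a..b, v * exp (β * v) =
      (b / β - 1 / β ^ 2) * exp (β * b) - (a / β - 1 / β ^ 2) * exp (β * a) := by
  have hderiv : ∀ v : ℝ, HasDerivAt (fun v => (v / β - 1 / β ^ 2) * exp (β * v))
      (v * exp (β * v)) v := fun v => by
    have hlin := ((hasDerivAt_id' v).div_const β).sub_const (1 / β ^ 2)
    have hexp := ((hasDerivAt_id' v).const_mul β).exp
    exact (hlin.mul hexp).congr_deriv (by field_simp; ring)
  exact intervalIntegral.integral_eq_sub_of_hasDerivAt (fun v _ => hderiv v)
    ((by fun_prop : Continuous fun v => v * exp (β * v)).intervalIntegrable _ _)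

lemma integral_exp_affine_of_normalization {ρ α β : ℝ}
    (hα : exp α = if β = 0 then ρ else ρ * β / sinh β) :
    ∫ v in (-1:ℝ)..1, exp (α + β * v) = 2 * ρ := by
  simp_rw [exp_add, intervalIntegral.integral_const_mul, hα]
  split_ifs with hβ
  · simp [hβ]; ring
  · have hsinh : exp β - exp (-β) = 2 * sinh β := by rw [sinh_eq]; ring
    have hs := sinh_ne_zero.2 hβ
    rw [integral_exp_const_mul hβ, mul_one, mul_neg_one, hsinh]
    field_simp

lemma integral_mul_exp_affine_of_normalization {ρ α β : ℝ}
    (hα : exp α = if β = 0 then ρ else ρ * β / sinh β) :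
    ∫ v in (-1:ℝ)..1, v * exp (α + β * v) = 2 * ρ * z β := by
  simp_rw [exp_add, mul_left_comm _ (exp α), intervalIntegral.integral_const_mul, hα]
  split_ifs with hβ
  · simp [hβ, z]
  · have hsinh : exp β - exp (-β) = 2 * sinh β := by rw [sinh_eq]; ring
    have hcosh : exp β + exp (-β) = 2 * cosh β := by rw [cosh_eq]; ring
    have hs := sinh_ne_zero.2 hβ
    rw [integral_mul_exp_const_mul hβ, z, mul_one, mul_neg_one]
    field_simp
    linear_combination (ρ * β) * hcosh - ρ * hsinh

theorem m1_entropy_minimizer_general (ρ j α β : ℝ) (hρ : 0 < ρ)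
    (hβ : z β = j / ρ)
    (hα : Real.exp α = if β = 0 then ρ else ρ * β / Real.sinh β) :
    ∀ f : ℝ → ℝ,
      MemLp f 2 (volume.restrict (Icc (-1:ℝ) 1)) →
      (∀ v ∈ Icc (-1:ℝ) 1, 0 ≤ f v) →
      (1/2) * ∫ v in (-1:ℝ)..1, f v = ρ →
      (1/2) * ∫ v in (-1:ℝ)..1, v * f v = j →
      (1/2) * ∫ v in (-1:ℝ)..1,
          (Real.exp (α + β * v) * Real.log (Real.exp (α + β * v)) - Real.exp (α + β * v))
        ≤ (1/2) * ∫ v in (-1:ℝ)..1, (f v * Real.log (f v) - f v) := by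
  intro f hf hf0 hmass hmom
  have hIcc (g : ℝ → ℝ) : ∫ v in (-1:ℝ)..1, g v = ∫ v in Icc (-1:ℝ) 1, g v := by
    rw [intervalIntegral.integral_of_le (by norm_num), integral_Icc_eq_integral_Ioc]
  have hg := integral_exp_affine_of_normalization hα
  have hvg : ∫ v in (-1:ℝ)..1, v * exp (α + β * v) = 2 * j := by
    rw [integral_mul_exp_affine_of_normalization hα, hβ]
    field_simp
  rw [hIcc] at hmass hmom hg hvg ⊢
  rw [hIcc]
  have hf0' : 0 ≤ᵐ[volume.restrict (Icc (-1:ℝ) 1)] f :=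
    ae_restrict_of_forall_mem measurableSet_Icc hf0
  have hfI : IntegrableOn f (Icc (-1) 1) := hf.integrable one_le_two
  have hgc : Continuous fun v => exp (α + β * v) := by fun_prop
  have hmoment {g : ℝ → ℝ} (hgI : IntegrableOn g (Icc (-1) 1)) :
      IntegrableOn (fun v => v * g v) (Icc (-1) 1) :=
    hgI.continuousOn_mul continuousOn_id isCompact_Icc
  refine mul_le_mul_of_nonneg_left (integral_entropyDensity_exp_le hf0' ?_
    ((hfI.sub hgc.integrableOn_Icc).continuousOn_mul (by fun_prop) isCompact_Icc)
    ((hf.integrable_mul_log hf0').sub hfI) ?_) (by norm_num)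
  · exact Continuous.integrableOn_Icc (by simpa only [entropyDensity, log_exp] using
      (by fun_prop : Continuous fun v => exp (α + β * v) * (α + β * v) - exp (α + β * v)))
  · exact integral_affine_mul_sub_eq_zero hfI hgc.integrableOn_Icc (hmoment hfI)
      (hmoment hgc.integrableOn_Icc) (by linarith) (by linarith) α β

/-- The exponential `f̂(v) = e^{α+βv}`, with `β = z⁻¹(j/ρ)` and `e^α = ρ β / sinh β`
(equal to `ρ` when `β = 0`), minimizes the Boltzmann entropy
`h(f) = ⟨f ln f − f⟩` among nonnegative `f ∈ L²([-1,1])` with moments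
`⟨f⟩ = ρ`, `⟨v f⟩ = j`. -/
theorem m1_entropy_minimizer (ρ j α β : ℝ) (hρ : 0 < ρ) (hj : |j / ρ| < 1)
    (hβ : z β = j / ρ)
    (hα : Real.exp α = if β = 0 then ρ else ρ * β / Real.sinh β) :
    ∀ f : ℝ → ℝ,
      MemLp f 2 (volume.restrict (Icc (-1:ℝ) 1)) →
      (∀ v ∈ Icc (-1:ℝ) 1, 0 ≤ f v) →
      (1/2) * ∫ v in (-1:ℝ)..1, f v = ρ →
      (1/2) * ∫ v in (-1:ℝ)..1, v * f v = j →
      (1/2) * ∫ v in (-1:ℝ)..1,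
          (Real.exp (α + β * v) * Real.log (Real.exp (α + β * v)) - Real.exp (α + β * v))
        ≤ (1/2) * ∫ v in (-1:ℝ)..1, (f v * Real.log (f v) - f v) :=
  m1_entropy_minimizer_general ρ j α β hρ hβ hα
end

section
/- For γ > 0 and α, β ∈ ℝ, the half density ρ⁺ = ⟨e^{α+βv+γv²} 𝟙_{v>0}⟩ satisfies ρ⁺ = (e^α/(2√γ))(e^{β+γ} D₊(√γ + β/(2√γ)) − D₊(β/(2√γ))), where D₊(x) = e^{−x²}∫₀ˣ e^{t²} dt is the Dawson function and ⟨g⟩ = (1/2)∫_{-1}^1 g(v) dv. -/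
/-- The Dawson function `D₊(x) = e^{−x²} ∫₀ˣ e^{t²} dt`. -/
noncomputable def dawson (x : ℝ) : ℝ := Real.exp (-x^2) * ∫ t in (0:ℝ)..x, Real.exp (t^2)

/-- For `γ > 0`, the half density of the M2 ansatz `e^{α+βv+γv²}` on `[-1,1]`:
`⟨f̂ 𝟙_{v>0}⟩ = (e^α/(2√γ))(e^{β+γ} D₊(√γ + β/(2√γ)) − D₊(β/(2√γ)))`. -/
theorem m2_half_density (α β γ : ℝ) (hγ : 0 < γ) :
    (1/2) * (∫ v in (0:ℝ)..1, Real.exp (α + β * v + γ * v^2))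
      = Real.exp α / (2 * Real.sqrt γ) *
        (Real.exp (β + γ) * dawson (Real.sqrt γ + β / (2 * Real.sqrt γ))
          - dawson (β / (2 * Real.sqrt γ))) := by
  set s := Real.sqrt γ with hs
  have hs0 : 0 < s := Real.sqrt_pos.mpr hγ
  have hs2 : s ^ 2 = γ := Real.sq_sqrt hγ.le
  set b := β / (2 * s) with hb
  have hsb : 2 * s * b = β := by
    rw [hb]; field_simp
  clear_value s b
  have key : ∀ v : ℝ, α + β * v + γ * v ^ 2 = (α - b ^ 2) + (s * v + b) ^ 2 := by
    intro v; linear_combination -v * hsb - v ^ 2 * hs2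
  have hcont : Continuous fun t : ℝ => Real.exp (t ^ 2) :=
    Real.continuous_exp.comp (continuous_pow 2)
  have h1 : (∫ v in (0:ℝ)..1, Real.exp (α + β * v + γ * v ^ 2))
      = Real.exp (α - b ^ 2) * s⁻¹ * ∫ t in b..(s + b), Real.exp (t ^ 2) := by
    have hcv := intervalIntegral.integral_comp_mul_add (a := 0) (b := 1)
        (fun t => Real.exp (t ^ 2)) (ne_of_gt hs0) b
    simp only [mul_zero, zero_add, mul_one, smul_eq_mul] at hcv
    calc (∫ v in (0:ℝ)..1, Real.exp (α + β * v + γ * v ^ 2))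
        = ∫ v in (0:ℝ)..1, Real.exp (α - b ^ 2) * Real.exp ((s * v + b) ^ 2) := by
          apply intervalIntegral.integral_congr
          intro v _
          simp only
          rw [← Real.exp_add, ← key v]
      _ = Real.exp (α - b ^ 2) * ∫ v in (0:ℝ)..1, Real.exp ((s * v + b) ^ 2) :=
          intervalIntegral.integral_const_mul _ _
      _ = Real.exp (α - b ^ 2) * (s⁻¹ * ∫ t in b..(s + b), Real.exp (t ^ 2)) := by
          rw [hcv]
      _ = _ := by ring
  have h3 : (∫ t in b..(s + b), Real.exp (t ^ 2))
      = (∫ t in (0:ℝ)..(s + b), Real.exp (t ^ 2)) - ∫ t in (0:ℝ)..b, Real.exp (t ^ 2) := by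
    rw [intervalIntegral.integral_interval_sub_left
      (hcont.intervalIntegrable _ _) (hcont.intervalIntegrable _ _)]
  have h2 : Real.exp (β + γ) * Real.exp (-(s + b) ^ 2) = Real.exp (-b ^ 2) := by
    rw [← Real.exp_add]; congr 1; nlinarith [hs2, hsb]
  rw [h1, h3]
  unfold dawson
  rw [show Real.exp (β + γ) * (Real.exp (-(s + b) ^ 2) * ∫ t in (0:ℝ)..(s + b), Real.exp (t ^ 2))
      = Real.exp (-b ^ 2) * ∫ t in (0:ℝ)..(s + b), Real.exp (t ^ 2) by
    rw [← mul_assoc, h2]]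
  have hea : Real.exp (α - b ^ 2) = Real.exp α * Real.exp (-b ^ 2) := by
    rw [← Real.exp_add]; ring_nf
  rw [hea]
  field_simp
end
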